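/- Let a, b, c, d be four distinct letters. For all r, s, i ∈ ℕ and all j with 1 ≤ j ≤ r + 1, the extended Wichmann word W(r, s, i, j) = a b^r ⋄^r (a ⋄^{2r})^r b (⋄^{4r+2} c)^s (⋄^{2r+1} d)^{r+1} b^r (⋄^r c)^i ⋄^{j−1} c over the alphabet {a, b, c, d} is unbordered. -/

import Mathlib

/-- The domain of a partial word (a list over `Option A`, where `none` is the hole):
the set of positions carrying a letter. -/
def PartialWord.domain {A : Type*} (w : List (Option A)) : Finset ℕ :=
  (Finset.range w.length).filter fun i => (w.getD i none).isSome

/-- Two partial words are compatible if they have the same length and agree on the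
intersection of their domains. -/
def PartialWord.Compatible {A : Type*} (w v : List (Option A)) : Prop :=
  w.length = v.length ∧
    ∀ i ∈ PartialWord.domain w ∩ PartialWord.domain v, w.getD i none = v.getD i none

/-- A partial word is unbordered if no nonempty proper prefix is compatible with a
suffix of the same length. -/
def PartialWord.Unbordered {A : Type*} (w : List (Option A)) : Prop :=
  ∀ x y : List (Option A), x <+: w → y <:+ w → x ≠ [] → x.length < w.length →
    x.length = y.length → ¬ PartialWord.Compatible x y

/-- The number of holes of a partial word. -/
def PartialWord.holes {A : Type*} (w : List (Option A)) : ℕ :=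
  w.countP fun x => x.isNone

/-- `u` repeated `t` times. -/
def listPow {α : Type*} (u : List α) (t : ℕ) : List α := (List.replicate t u).flatten

/-- A complete sparse ruler of length `n`. -/
def IsCompleteRuler (n : ℕ) (R : Finset ℕ) : Prop :=
  (∀ x ∈ R, x ≤ n) ∧ 0 ∈ R ∧ n ∈ R ∧ ∀ d ≤ n, ∃ r ∈ R, ∃ s ∈ R, r = s + d

/-- Minimum number of marks of a complete sparse ruler of length `n`. -/
noncomputable def M1 (n : ℕ) : ℕ :=
  sInf {k | ∃ R : Finset ℕ, IsCompleteRuler n R ∧ R.card = k}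

/-- Maximum number of holes an unbordered partial word of length `n` over an alphabet
of size `k` can have. -/
noncomputable def HB (k n : ℕ) : ℕ :=
  sSup {h | ∃ w : List (Option (Fin k)),
    w.length = n ∧ PartialWord.Unbordered w ∧ PartialWord.holes w = h}

/-- The ruler (set of partial sums) given by a difference representation. -/
def rulerOfDiffs (D : List ℕ) : Finset ℕ :=
  ((List.range (D.length + 1)).map fun t => (D.take t).sum).toFinset

/-- The difference representation of the extended Wichmann ruler `w₁(r,s,i,j)`. -/
def wichmannDiffs (r s i j : ℕ) : List ℕ :=
  List.replicate r 1 ++ [r + 1] ++ List.replicate r (2 * r + 1) ++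
    List.replicate s (4 * r + 3) ++ List.replicate (r + 1) (2 * r + 2) ++
    List.replicate r 1 ++ List.replicate i (r + 1) ++ [j]

/-- A complete two-dimensional sparse ruler: an `(n,m)`-ruler. -/
def IsRuler2 (n m : ℕ) (R : Finset (ℕ × ℕ)) : Prop :=
  (∀ p ∈ R, p.1 < n ∧ p.2 < m) ∧
    ∀ x y : ℤ, |x| ≤ (n : ℤ) - 1 → |y| ≤ (m : ℤ) - 1 →
      ∃ p ∈ R, ∃ q ∈ R, (p.1 : ℤ) - (q.1 : ℤ) = x ∧ (p.2 : ℤ) - (q.2 : ℤ) = y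

/-- Minimum number of marks of an `(n,m)`-ruler. -/
noncomputable def M2 (n m : ℕ) : ℕ :=
  sInf {k | ∃ R : Finset (ℕ × ℕ), IsRuler2 n m R ∧ R.card = k}

/-- The domain of an `n` by `m` two-dimensional partial word. -/
def domain2 {A : Type*} (n m : ℕ) (w : ℕ × ℕ → Option A) : Finset (ℕ × ℕ) :=
  (Finset.range n ×ˢ Finset.range m).filter fun p => (w p).isSome

/-- An `n` by `m` two-dimensional partial word is unbordered if its domain is an
`(n,m)`-ruler and every nonzero measurable vector can be measured between two
positions carrying distinct letters. -/
def Unbordered2 {A : Type*} (n m : ℕ) (w : ℕ × ℕ → Option A) : Prop :=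
  IsRuler2 n m (domain2 n m w) ∧
    ∀ x y : ℤ, |x| ≤ (n : ℤ) - 1 → |y| ≤ (m : ℤ) - 1 → ¬(x = 0 ∧ y = 0) →
      ∃ p ∈ domain2 n m w, ∃ q ∈ domain2 n m w,
        (p.1 : ℤ) - (q.1 : ℤ) = x ∧ (p.2 : ℤ) - (q.2 : ℤ) = y ∧ w p ≠ w q

/-- Number of holes of an `n` by `m` two-dimensional partial word. -/
def holes2 {A : Type*} (n m : ℕ) (w : ℕ × ℕ → Option A) : ℕ :=
  n * m - (domain2 n m w).card

/-- Maximum number of holes an unbordered `n` by `m` two-dimensional partial word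
over an alphabet of size `k` can have. -/
noncomputable def HB2 (k n m : ℕ) : ℕ :=
  sSup {h | ∃ w : ℕ × ℕ → Option (Fin k), Unbordered2 n m w ∧ holes2 n m w = h}

/-!
Write `P = 2r + 1` and `Q = 2r + 2`, so that `4r + 3 = P + Q`. The letters of the word sit at
`τP` (`aBlock`: `a` for `τ ≤ r`, the `middle` `b` for `τ = r + 1`), at `1, …, r` (`bPrefix`),
at `(r + 1)P + σ(P + Q)` (`cBlock`), at `(r + 1)P + s(P + Q) + uQ` (`dBlock`), then on the
`bSuffix`, on the `cTail` of `c`'s spaced `r + 1` apart and on the `last` `c`. A border of length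
`n - k` forces all letters at distance `k` to agree, so it suffices to find, for each `1 ≤ k < n`,
two distinct letters at distance `k`. Distances between the blocks are sums `αP + βQ` with `α, β`
in intervals, and reading `k` modulo `P` (up to the middle `b`), modulo `P + Q` (across the
`cBlock`) and modulo `r + 1` (in the tail) always places it in one of them.
-/

theorem listPow_succ {α : Type*} (u : List α) (t : ℕ) : listPow u (t + 1) = u ++ listPow u t := by
  simp [listPow, List.replicate_succ]

theorem length_listPow {α : Type*} (u : List α) (t : ℕ) : (listPow u t).length = t * u.length := by
  simp [listPow, List.sum_replicate]

theorem getD_listPow {α : Type*} {u : List α} {t p q e : ℕ} (d : α) (hp : p = q * u.length + e)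
    (hq : q < t) (he : e < u.length) : (listPow u t).getD p d = u.getD e d := by
  subst hp
  induction q generalizing t with
  | zero =>
    obtain ⟨t, rfl⟩ := Nat.exists_eq_add_of_lt hq
    rw [Nat.zero_add, listPow_succ, zero_mul, zero_add, List.getD_append _ _ _ _ he]
  | succ q ih =>
    obtain ⟨t, rfl⟩ := Nat.exists_eq_add_of_lt hq
    rw [listPow_succ, List.getD_append_right _ _ _ _ (by nlinarith),
      show (q + 1) * u.length + e - u.length = q * u.length + e by rw [add_mul]; omega]
    exact ih (by omega)

namespace List

variable {α : Type*}

theorem getD_append_left_of_eq_some {u v : List (Option α)} {p : ℕ} {x : α}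
    (h : u.getD p none = some x) : (u ++ v).getD p none = some x := by
  have hp : p < u.length := by
    by_contra! hp
    rw [getD_eq_default _ _ hp] at h
    cases h
  rwa [getD_append _ _ _ _ hp]

theorem getD_append_of_eq_length_add {u v : List α} {p e : ℕ} (d : α) (hp : p = u.length + e) :
    (u ++ v).getD p d = v.getD e d := by
  rw [hp, getD_append_right _ _ _ _ (by omega), Nat.add_sub_cancel_left]

end List

namespace PartialWord

variable {A : Type*}

def MismatchAt (w : List (Option A)) (k : ℕ) : Prop :=
  ∃ p l₁ l₂, w.getD p none = some l₁ ∧ w.getD (p + k) none = some l₂ ∧ l₁ ≠ l₂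

theorem mismatchAt_of_getD {w : List (Option A)} {x y k : ℕ} {l₁ l₂ : A}
    (hx : w.getD x none = some l₁) (hy : w.getD y none = some l₂) (hne : l₁ ≠ l₂)
    (hk : x + k = y) : MismatchAt w k :=
  ⟨x, l₁, l₂, hx, hk ▸ hy, hne⟩

theorem mismatchAt_of_exists_getD {w : List (Option A)} {x y k : ℕ} {S T : Set A}
    (hx : ∃ l ∈ S, w.getD x none = some l) (hy : ∃ l ∈ T, w.getD y none = some l)
    (hST : Disjoint S T) (hk : x + k = y) : MismatchAt w k := by
  obtain ⟨l₁, hl₁, hx⟩ := hx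
  obtain ⟨l₂, hl₂, hy⟩ := hy
  exact mismatchAt_of_getD hx hy (hST.ne_of_mem hl₁ hl₂) hk

theorem unbordered_of_mismatchAt {w : List (Option A)}
    (h : ∀ k, 0 < k → k < w.length → MismatchAt w k) : Unbordered w := by
  rintro x y ⟨x', rfl⟩ ⟨y', hy⟩ hx hlt hlen ⟨-, hcomp⟩
  have hy' : y'.length = x'.length := by
    have := congrArg List.length hy
    simp only [List.length_append] at this hlt
    omega
  obtain ⟨p, l₁, l₂, h₁, h₂, hne⟩ :=
    h x'.length (by simp at hlt; omega) (by simp [List.length_pos_iff.2 hx])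
  have hp : p < x.length := by
    by_contra! hp
    rw [List.getD_eq_default _ _ (by simp; omega)] at h₂
    cases h₂
  rw [List.getD_append _ _ _ _ hp] at h₁
  rw [← hy, List.getD_append_of_eq_length_add _ (by omega : p + x'.length = y'.length + p)] at h₂
  have hmem : p ∈ domain x ∩ domain y := by
    simp only [domain, Finset.mem_inter, Finset.mem_filter, Finset.mem_range, h₁, h₂,
      Option.isSome_some, ← hlen, hp, and_self]
  exact hne (Option.some.inj ((h₁.symm.trans (hcomp p hmem)).trans h₂))

end PartialWord

section WichmannWord

def wichmannWord {A : Type*} (a b c d : A) (r s i j : ℕ) : List (Option A) :=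
  [some a] ++ List.replicate r (some b) ++ List.replicate r none ++
    listPow ([some a] ++ List.replicate (2 * r) none) r ++ [some b] ++
    listPow (List.replicate (4 * r + 2) none ++ [some c]) s ++
    listPow (List.replicate (2 * r + 1) none ++ [some d]) (r + 1) ++
    List.replicate r (some b) ++
    listPow (List.replicate r none ++ [some c]) i ++
    List.replicate (j - 1) none ++ [some c]

variable {A : Type*} {a b c d : A} {r s i j k : ℕ}

local notation "W" => wichmannWord a b c d r s i j

theorem length_wichmannWord (hj : 1 ≤ j) :
    (W).length = (r + 1) * (2 * r + 1) + s * (4 * r + 3) + (r + 1) * (2 * r + 2) + r +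
      i * (r + 1) + j + 1 := by
  obtain ⟨j, rfl⟩ := Nat.exists_eq_add_of_le' hj
  simp [wichmannWord, length_listPow]
  ring

theorem getD_wichmannWord_aBlock {τ : ℕ} (hτ : τ ≤ r) :
    (W).getD (τ * (2 * r + 1)) none = some a := by
  rcases τ with _ | τ
  · iterate 10 apply List.getD_append_left_of_eq_some
    simp
  iterate 7 apply List.getD_append_left_of_eq_some
  rw [List.getD_append_of_eq_length_add _ (e := τ * (2 * r + 1)) (by simp; ring),
    getD_listPow _ (q := τ) (e := 0) (by simp) (by omega) (by simp)]
  rfl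

theorem getD_wichmannWord_middle : (W).getD ((r + 1) * (2 * r + 1)) none = some b := by
  iterate 6 apply List.getD_append_left_of_eq_some
  rw [List.getD_append_of_eq_length_add _ (e := 0) (by simp [length_listPow]; ring)]
  rfl

theorem getD_wichmannWord_bPrefix {e : ℕ} (he₁ : 1 ≤ e) (he : e ≤ r) :
    (W).getD e none = some b := by
  iterate 9 apply List.getD_append_left_of_eq_some
  rw [List.getD_append_of_eq_length_add _ (e := e - 1) (by simp; omega),
    List.getD_replicate _ (by omega)]

theorem getD_wichmannWord_cBlock {σ : ℕ} (hσ₁ : 1 ≤ σ) (hσ : σ ≤ s) :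
    (W).getD ((r + 1) * (2 * r + 1) + σ * (4 * r + 3)) none = some c := by
  obtain ⟨σ, rfl⟩ := Nat.exists_eq_add_of_le' hσ₁
  iterate 5 apply List.getD_append_left_of_eq_some
  rw [List.getD_append_of_eq_length_add _ (e := σ * (4 * r + 3) + (4 * r + 2))
      (by simp [length_listPow]; ring),
    getD_listPow _ (q := σ) (e := 4 * r + 2) (by simp) (by omega) (by simp)]
  simp

theorem getD_wichmannWord_dBlock {u : ℕ} (hu₁ : 1 ≤ u) (hu : u ≤ r + 1) :
    (W).getD ((r + 1) * (2 * r + 1) + s * (4 * r + 3) + u * (2 * r + 2)) none = some d := by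
  obtain ⟨u, rfl⟩ := Nat.exists_eq_add_of_le' hu₁
  iterate 4 apply List.getD_append_left_of_eq_some
  rw [List.getD_append_of_eq_length_add _ (e := u * (2 * r + 2) + (2 * r + 1))
      (by simp [length_listPow]; ring),
    getD_listPow _ (q := u) (e := 2 * r + 1) (by simp) (by omega) (by simp)]
  simp

theorem getD_wichmannWord_bSuffix {e : ℕ} (he₁ : 1 ≤ e) (he : e ≤ r) :
    (W).getD ((r + 1) * (2 * r + 1) + s * (4 * r + 3) + (r + 1) * (2 * r + 2) + e) none =
      some b := by
  obtain ⟨e, rfl⟩ := Nat.exists_eq_add_of_le' he₁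
  iterate 3 apply List.getD_append_left_of_eq_some
  rw [List.getD_append_of_eq_length_add _ (e := e) (by simp [length_listPow]; ring),
    List.getD_replicate _ (by omega)]

theorem getD_wichmannWord_cTail {v : ℕ} (hv₁ : 1 ≤ v) (hv : v ≤ i) :
    (W).getD ((r + 1) * (2 * r + 1) + s * (4 * r + 3) + (r + 1) * (2 * r + 2) + r +
      v * (r + 1)) none = some c := by
  obtain ⟨v, rfl⟩ := Nat.exists_eq_add_of_le' hv₁
  iterate 2 apply List.getD_append_left_of_eq_some
  rw [List.getD_append_of_eq_length_add _ (e := v * (r + 1) + r)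
      (by simp [length_listPow]; ring),
    getD_listPow _ (q := v) (e := r) (by simp) (by omega) (by simp)]
  simp

theorem getD_wichmannWord_last (hj : 1 ≤ j) :
    (W).getD ((r + 1) * (2 * r + 1) + s * (4 * r + 3) + (r + 1) * (2 * r + 2) + r +
      i * (r + 1) + j) none = some c := by
  obtain ⟨j, rfl⟩ := Nat.exists_eq_add_of_le' hj
  rw [wichmannWord, List.getD_append_of_eq_length_add _ (e := 0) (by simp [length_listPow]; ring)]
  rfl

theorem exists_getD_wichmannWord_aBlock {τ : ℕ} (hτ : τ ≤ r + 1) :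
    ∃ l ∈ ({a, b} : Set A), (W).getD (τ * (2 * r + 1)) none = some l := by
  rcases hτ.lt_or_eq with hτ | rfl
  · exact ⟨a, by simp, getD_wichmannWord_aBlock (by omega)⟩
  · exact ⟨b, by simp, getD_wichmannWord_middle⟩

theorem exists_getD_wichmannWord_cBlock {σ : ℕ} (hσ : σ ≤ s) :
    ∃ l ∈ ({b, c} : Set A), (W).getD ((r + 1) * (2 * r + 1) + σ * (4 * r + 3)) none = some l := by
  rcases Nat.eq_zero_or_pos σ with rfl | hσ₁
  · exact ⟨b, by simp, by simpa using getD_wichmannWord_middle⟩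
  · exact ⟨c, by simp, getD_wichmannWord_cBlock hσ₁ hσ⟩

theorem exists_getD_wichmannWord_bPrefix {e : ℕ} (he : e ≤ r) :
    ∃ l ∈ ({a, b} : Set A), (W).getD e none = some l := by
  rcases Nat.eq_zero_or_pos e with rfl | he₁
  · exact ⟨a, by simp, by simpa using getD_wichmannWord_aBlock (Nat.zero_le r)⟩
  · exact ⟨b, by simp, getD_wichmannWord_bPrefix he₁ he⟩

open PartialWord

theorem mismatchAt_wichmannWord_start_bPrefix (hab : a ≠ b) (hk₀ : 0 < k) (hk : k ≤ r) :
    MismatchAt W k :=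
  mismatchAt_of_getD (getD_wichmannWord_aBlock (Nat.zero_le r)) (getD_wichmannWord_bPrefix hk₀ hk)
    hab (by simp)

theorem mismatchAt_wichmannWord_bPrefix_aBlock (hab : a ≠ b) {e τ : ℕ} (he₁ : 1 ≤ e)
    (he : e ≤ r) (hτ : τ ≤ r) (hk : e + k = τ * (2 * r + 1)) : MismatchAt W k :=
  mismatchAt_of_getD (getD_wichmannWord_bPrefix he₁ he) (getD_wichmannWord_aBlock hτ) hab.symm hk

theorem mismatchAt_wichmannWord_aBlock_cBlock (hab : a ≠ b) (hac : a ≠ c) (hbc : b ≠ c)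
    {τ σ : ℕ} (hτ : τ ≤ r + 1) (hσ : σ ≤ s) (hk₀ : 0 < k)
    (hk : τ * (2 * r + 1) + k = (r + 1) * (2 * r + 1) + σ * (4 * r + 3)) : MismatchAt W k := by
  rcases Nat.eq_zero_or_pos σ with rfl | hσ₁
  · have hτ : τ ≤ r := by nlinarith
    exact mismatchAt_of_getD (getD_wichmannWord_aBlock hτ) getD_wichmannWord_middle hab
      (by simpa using hk)
  · exact mismatchAt_of_exists_getD (exists_getD_wichmannWord_aBlock hτ)
      ⟨c, Set.mem_singleton c, getD_wichmannWord_cBlock hσ₁ hσ⟩ (by simp [hac.symm, hbc.symm]) hk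

theorem mismatchAt_wichmannWord_aBlock_dBlock (had : a ≠ d) (hbd : b ≠ d) {τ u : ℕ}
    (hτ : τ ≤ r + 1) (hu₁ : 1 ≤ u) (hu : u ≤ r + 1)
    (hk : τ * (2 * r + 1) + k = (r + 1) * (2 * r + 1) + s * (4 * r + 3) + u * (2 * r + 2)) :
    MismatchAt W k :=
  mismatchAt_of_exists_getD (exists_getD_wichmannWord_aBlock hτ)
    ⟨d, Set.mem_singleton d, getD_wichmannWord_dBlock hu₁ hu⟩ (by simp [had.symm, hbd.symm]) hk

theorem mismatchAt_wichmannWord_cBlock_dBlock (hbd : b ≠ d) (hcd : c ≠ d) {σ u : ℕ}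
    (hσ : σ ≤ s) (hu₁ : 1 ≤ u) (hu : u ≤ r + 1)
    (hk : (r + 1) * (2 * r + 1) + σ * (4 * r + 3) + k =
      (r + 1) * (2 * r + 1) + s * (4 * r + 3) + u * (2 * r + 2)) :
    MismatchAt W k :=
  mismatchAt_of_exists_getD (exists_getD_wichmannWord_cBlock hσ)
    ⟨d, Set.mem_singleton d, getD_wichmannWord_dBlock hu₁ hu⟩ (by simp [hbd.symm, hcd.symm]) hk

theorem mismatchAt_wichmannWord_bPrefix_dBlock (had : a ≠ d) (hbd : b ≠ d) {e u : ℕ}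
    (he : e ≤ r) (hu₁ : 1 ≤ u) (hu : u ≤ r + 1)
    (hk : e + k = (r + 1) * (2 * r + 1) + s * (4 * r + 3) + u * (2 * r + 2)) :
    MismatchAt W k :=
  mismatchAt_of_exists_getD (exists_getD_wichmannWord_bPrefix he)
    ⟨d, Set.mem_singleton d, getD_wichmannWord_dBlock hu₁ hu⟩ (by simp [had.symm, hbd.symm]) hk

theorem mismatchAt_wichmannWord_dBlock_bSuffix (hbd : b ≠ d) {u e : ℕ} (hu₁ : 1 ≤ u)
    (hu : u ≤ r + 1) (he₁ : 1 ≤ e) (he : e ≤ r)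
    (hk : (r + 1) * (2 * r + 1) + s * (4 * r + 3) + u * (2 * r + 2) + k =
      (r + 1) * (2 * r + 1) + s * (4 * r + 3) + (r + 1) * (2 * r + 2) + e) :
    MismatchAt W k :=
  mismatchAt_of_getD (getD_wichmannWord_dBlock hu₁ hu) (getD_wichmannWord_bSuffix he₁ he)
    hbd.symm hk

theorem mismatchAt_wichmannWord_aBlock_bSuffix (hab : a ≠ b) {τ e : ℕ} (hτ : τ ≤ r)
    (he₁ : 1 ≤ e) (he : e ≤ r)
    (hk : τ * (2 * r + 1) + k =
      (r + 1) * (2 * r + 1) + s * (4 * r + 3) + (r + 1) * (2 * r + 2) + e) :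
    MismatchAt W k :=
  mismatchAt_of_getD (getD_wichmannWord_aBlock hτ) (getD_wichmannWord_bSuffix he₁ he) hab hk

theorem mismatchAt_wichmannWord_bPrefix_cBlock (hac : a ≠ c) (hbc : b ≠ c) {e σ : ℕ}
    (he : e ≤ r) (hσ₁ : 1 ≤ σ) (hσ : σ ≤ s)
    (hk : e + k = (r + 1) * (2 * r + 1) + σ * (4 * r + 3)) : MismatchAt W k :=
  mismatchAt_of_exists_getD (exists_getD_wichmannWord_bPrefix he)
    ⟨c, Set.mem_singleton c, getD_wichmannWord_cBlock hσ₁ hσ⟩ (by simp [hac.symm, hbc.symm]) hk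

theorem mismatchAt_wichmannWord_cBlock_bSuffix (hbc : b ≠ c) {σ e : ℕ} (hσ₁ : 1 ≤ σ)
    (hσ : σ ≤ s) (he₁ : 1 ≤ e) (he : e ≤ r)
    (hk : (r + 1) * (2 * r + 1) + σ * (4 * r + 3) + k =
      (r + 1) * (2 * r + 1) + s * (4 * r + 3) + (r + 1) * (2 * r + 2) + e) :
    MismatchAt W k :=
  mismatchAt_of_getD (getD_wichmannWord_cBlock hσ₁ hσ) (getD_wichmannWord_bSuffix he₁ he)
    hbc.symm hk

theorem mismatchAt_wichmannWord_bPrefix_cTail (hac : a ≠ c) (hbc : b ≠ c) {e v : ℕ}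
    (he : e ≤ r) (hv₁ : 1 ≤ v) (hv : v ≤ i)
    (hk : e + k = (r + 1) * (2 * r + 1) + s * (4 * r + 3) + (r + 1) * (2 * r + 2) + r +
      v * (r + 1)) : MismatchAt W k :=
  mismatchAt_of_exists_getD (exists_getD_wichmannWord_bPrefix he)
    ⟨c, Set.mem_singleton c, getD_wichmannWord_cTail hv₁ hv⟩ (by simp [hac.symm, hbc.symm]) hk

theorem mismatchAt_wichmannWord_bPrefix_last (hac : a ≠ c) (hbc : b ≠ c) (hj : 1 ≤ j) {e : ℕ}
    (he : e ≤ r)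
    (hk : e + k = (r + 1) * (2 * r + 1) + s * (4 * r + 3) + (r + 1) * (2 * r + 2) + r +
      i * (r + 1) + j) : MismatchAt W k :=
  mismatchAt_of_exists_getD (exists_getD_wichmannWord_bPrefix he)
    ⟨c, Set.mem_singleton c, getD_wichmannWord_last hj⟩ (by simp [hac.symm, hbc.symm]) hk

theorem mismatchAt_wichmannWord_mul_add_of_le (hab : a ≠ b) (hac : a ≠ c) (had : a ≠ d)
    (hbc : b ≠ c) (hbd : b ≠ d) (hcd : c ≠ d) {q f : ℕ} (hq : q ≤ r) (hf₁ : 1 ≤ f)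
    (hf : f ≤ r) : MismatchAt W (q * (2 * r + 1) + f) := by
  rcases lt_or_ge q f with hqf | hfq
  · exact mismatchAt_wichmannWord_dBlock_bSuffix hbd (u := r + 1 - q) (e := f - q) (by omega)
      (by omega) (by omega) (by omega) (by zify [(by omega : q ≤ r + 1), hqf.le]; ring)
  obtain ⟨t, rfl⟩ := Nat.exists_eq_add_of_le hfq
  by_cases h₁ : t < f ∧ t ≤ s
  · exact mismatchAt_wichmannWord_cBlock_dBlock hbd hcd (σ := s - t) (u := f - t) (by omega)
      (by omega) (by omega) (by zify [h₁.1.le, h₁.2]; ring)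
  by_cases h₂ : f ≤ t ∧ f ≤ s
  · exact mismatchAt_wichmannWord_aBlock_cBlock hab hac hbc (τ := r + 1 - (t - f)) (σ := f)
      (by omega) h₂.2 (by positivity) (by zify [h₂.1, (by omega : t - f ≤ r + 1)]; ring)
  · exact mismatchAt_wichmannWord_aBlock_dBlock had hbd (τ := r + 1 - (t - s)) (u := f - s)
      (by omega) (by omega) (by omega)
      (by zify [(by omega : s ≤ t), (by omega : s ≤ f), (by omega : t - s ≤ r + 1)]; ring)

theorem mismatchAt_wichmannWord_of_le_middle (hab : a ≠ b) (hac : a ≠ c) (had : a ≠ d)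
    (hbc : b ≠ c) (hbd : b ≠ d) (hcd : c ≠ d) (hk₀ : r < k)
    (hk : k ≤ (r + 1) * (2 * r + 1)) : MismatchAt W k := by
  obtain ⟨q, f, hf, rfl⟩ : ∃ q f, f < 2 * r + 1 ∧ k = q * (2 * r + 1) + f :=
    ⟨k / (2 * r + 1), k % (2 * r + 1), Nat.mod_lt _ (by omega), (Nat.div_add_mod' k _).symm⟩
  rcases Nat.eq_zero_or_pos f with rfl | hf₁
  · have hq : q ≤ r + 1 := by nlinarith
    exact mismatchAt_wichmannWord_aBlock_cBlock hab hac hbc (τ := r + 1 - q) (σ := 0)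
      (by omega) (Nat.zero_le s) (by omega) (by zify [hq]; ring)
  have hq : q ≤ r := by nlinarith
  rcases le_or_gt f r with hfr | hfr
  · exact mismatchAt_wichmannWord_mul_add_of_le hab hac had hbc hbd hcd hq hf₁ hfr
  rcases hq.lt_or_eq with hqr | rfl
  · exact mismatchAt_wichmannWord_bPrefix_aBlock hab (e := 2 * r + 1 - f) (τ := q + 1)
      (by omega) (by omega) hqr (by zify [hf.le]; ring)
  · exact mismatchAt_wichmannWord_dBlock_bSuffix hbd (u := 1) (e := f - q) le_rfl (by omega)
      (by omega) (by omega) (by zify [hfr.le]; ring)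

theorem mismatchAt_wichmannWord_of_dBlock (hab : a ≠ b) (had : a ≠ d) (hbd : b ≠ d)
    (hk₀ : (r + 1) * (2 * r + 1) + s * (4 * r + 3) + r + 1 < k)
    (hk : k ≤ (r + 1) * (2 * r + 1) + s * (4 * r + 3) + (r + 1) * (2 * r + 2)) :
    MismatchAt W k := by
  obtain ⟨θ, hθ⟩ := Nat.exists_eq_add_of_le hk
  obtain ⟨m, h, hh, rfl⟩ : ∃ m h, h < 2 * r + 1 ∧ θ = m * (2 * r + 1) + h :=
    ⟨θ / (2 * r + 1), θ % (2 * r + 1), Nat.mod_lt _ (by omega), (Nat.div_add_mod' θ _).symm⟩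
  have hm : m ≤ r := by nlinarith
  rcases le_or_gt h m with hhm | hmh
  · exact mismatchAt_wichmannWord_aBlock_dBlock had hbd (τ := m - h) (u := r + 1 - h)
      (by omega) (by omega) (by omega)
      (by zify [hhm, (by omega : h ≤ r + 1)] at hθ ⊢; linear_combination -hθ)
  rcases le_or_gt h (m + r) with hmh' | hmh'
  · exact mismatchAt_wichmannWord_bPrefix_dBlock had hbd (e := h - m) (u := r + 1 - m)
      (by omega) (by omega) (by omega)
      (by zify [hmh.le, (by omega : m ≤ r + 1)] at hθ ⊢; linear_combination -hθ)
  · exact mismatchAt_wichmannWord_aBlock_bSuffix hab (τ := m + 1) (e := 2 * r + 1 - h)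
      (by omega) (by omega) (by omega)
      (by zify [hh.le] at hθ ⊢; linear_combination -hθ)

-- With `ε ∈ {0, 1}` this treats the shifts `(r + 1)(2r + 1) + t(4r + 3) + y` with `y` in
-- `[1, r]` and in `[2r + 2, 3r + 2]` at once.
theorem mismatchAt_wichmannWord_cBlock_window (hab : a ≠ b) (hac : a ≠ c) (had : a ≠ d)
    (hbc : b ≠ c) (hbd : b ≠ d) (hcd : c ≠ d) {ε t z : ℕ} (hε : ε ≤ 1) (hz₁ : 1 ≤ z)
    (hz : z ≤ r + ε) (hts : t + ε ≤ s)
    (hk : k = (r + 1 + ε) * (2 * r + 1) + t * (4 * r + 3) + z) : MismatchAt W k := by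
  subst hk
  by_cases h₁ : r + 2 + ε ≤ 2 * z ∧ r + 1 + ε ≤ s - t + z
  · exact mismatchAt_wichmannWord_cBlock_dBlock hbd hcd (σ := s - (r + 1 + ε + t - z))
      (u := 2 * z - (r + 1 + ε)) (by omega) (by omega) (by omega)
      (by zify [(by omega : z ≤ r + 1 + ε + t), (by omega : r + 1 + ε + t - z ≤ s),
        (by omega : r + 1 + ε ≤ 2 * z)]; ring)
  by_cases h₂ : z ≤ s - t
  · exact mismatchAt_wichmannWord_aBlock_cBlock hab hac hbc (τ := 2 * z - ε) (σ := t + z)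
      (by omega) (by omega) (by positivity) (by zify [(by omega : ε ≤ 2 * z)]; ring)
  · exact mismatchAt_wichmannWord_aBlock_dBlock had hbd (τ := s - t + z - ε) (u := z - (s - t))
      (by omega) (by omega) (by omega)
      (by zify [(by omega : ε ≤ s - t + z), (by omega : s - t ≤ z), (by omega : t ≤ s)]; ring)

theorem mismatchAt_wichmannWord_of_cBlock (hab : a ≠ b) (hac : a ≠ c) (had : a ≠ d)
    (hbc : b ≠ c) (hbd : b ≠ d) (hcd : c ≠ d) (hk₀ : (r + 1) * (2 * r + 1) < k)
    (hk : k ≤ (r + 1) * (2 * r + 1) + s * (4 * r + 3) + r + 1) : MismatchAt W k := by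
  obtain ⟨x, rfl⟩ := Nat.exists_eq_add_of_le hk₀.le
  obtain ⟨t, y, hy, rfl⟩ : ∃ t y, y < 4 * r + 3 ∧ x = t * (4 * r + 3) + y :=
    ⟨x / (4 * r + 3), x % (4 * r + 3), Nat.mod_lt _ (by omega), (Nat.div_add_mod' x _).symm⟩
  have hts : t ≤ s := by nlinarith
  rcases Nat.eq_zero_or_pos y with rfl | hy₁
  · exact mismatchAt_wichmannWord_aBlock_cBlock hab hac hbc (τ := 0) (σ := t) (by omega) hts
      (by omega) (by ring)
  rcases le_or_gt y r with hyr | hyr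
  · exact mismatchAt_wichmannWord_cBlock_window hab hac had hbc hbd hcd (ε := 0) (t := t)
      (z := y) zero_le_one hy₁ (by omega) (by omega) (by ring)
  rcases le_or_gt y (r + 1) with hyr₁ | hyr₁
  · obtain rfl : y = r + 1 := by omega
    exact mismatchAt_wichmannWord_cBlock_dBlock hbd hcd (σ := s - t) (u := r + 1) (by omega)
      (by omega) le_rfl (by zify [hts]; ring)
  have hts' : t < s := by nlinarith
  rcases le_or_gt y (2 * r + 1) with hyr₂ | hyr₂
  · exact mismatchAt_wichmannWord_cBlock_bSuffix hbc (σ := s - t) (e := y - (r + 1)) (by omega)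
      (by omega) (by omega) (by omega) (by zify [hts, hyr₁.le]; ring)
  rcases le_or_gt y (3 * r + 2) with hyr₃ | hyr₃
  · exact mismatchAt_wichmannWord_cBlock_window hab hac had hbc hbd hcd (ε := 1) (t := t)
      (z := y - (2 * r + 1)) le_rfl (by omega) (by omega) (by omega) (by zify [hyr₂.le]; ring)
  · exact mismatchAt_wichmannWord_bPrefix_cBlock hac hbc (e := 4 * r + 3 - y) (σ := t + 1)
      (by omega) (by omega) (by omega) (by zify [hy.le]; ring)

theorem mismatchAt_wichmannWord_of_bSuffix (hab : a ≠ b) (hac : a ≠ c) (hbc : b ≠ c)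
    (hj₁ : 1 ≤ j) (hj₂ : j ≤ r + 1)
    (hk₀ : (r + 1) * (2 * r + 1) + s * (4 * r + 3) + (r + 1) * (2 * r + 2) < k)
    (hk : k ≤ (r + 1) * (2 * r + 1) + s * (4 * r + 3) + (r + 1) * (2 * r + 2) + r +
      i * (r + 1) + j) : MismatchAt W k := by
  obtain ⟨x, rfl⟩ := Nat.exists_eq_add_of_lt hk₀
  rcases lt_or_ge x r with hxr | hxr
  · exact mismatchAt_wichmannWord_aBlock_bSuffix hab (τ := 0) (e := x + 1) (Nat.zero_le r)
      (by omega) hxr (by ring)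
  obtain ⟨x, rfl⟩ := Nat.exists_eq_add_of_le hxr
  rcases lt_or_ge x (i * (r + 1)) with hxi | hxi
  · obtain ⟨v, z, hz, rfl⟩ : ∃ v z, z < r + 1 ∧ x = v * (r + 1) + z :=
      ⟨x / (r + 1), x % (r + 1), Nat.mod_lt _ (by omega), (Nat.div_add_mod' x _).symm⟩
    exact mismatchAt_wichmannWord_bPrefix_cTail hac hbc (e := r - z) (v := v + 1) (by omega)
      (by omega) (by nlinarith) (by zify [(by omega : z ≤ r)]; ring)
  · exact mismatchAt_wichmannWord_bPrefix_last hac hbc hj₁ (by omega : i * (r + 1) + j - 1 - x ≤ r)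
      (by omega)

end WichmannWord

/-- For four distinct letters `a, b, c, d`, all `r, s, i ∈ ℕ` and all `j`
with `1 ≤ j ≤ r + 1`, the extended Wichmann word
`W(r,s,i,j) = a bʳ ⋄ʳ (a ⋄²ʳ)ʳ b (⋄⁴ʳ⁺²c)ˢ (⋄²ʳ⁺¹d)ʳ⁺¹ bʳ (⋄ʳc)ⁱ ⋄ʲ⁻¹ c` over the
alphabet `{a,b,c,d}` is unbordered. -/
theorem extendedWichmannWord_unbordered {A : Type*} (a b c d : A) (hab : a ≠ b)
    (hac : a ≠ c) (had : a ≠ d) (hbc : b ≠ c) (hbd : b ≠ d) (hcd : c ≠ d)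
    (r s i j : ℕ) (hj1 : 1 ≤ j) (hj2 : j ≤ r + 1) :
    PartialWord.Unbordered
      (([some a] ++ List.replicate r (some b) ++ List.replicate r none ++
        listPow ([some a] ++ List.replicate (2 * r) none) r ++ [some b] ++
        listPow (List.replicate (4 * r + 2) none ++ [some c]) s ++
        listPow (List.replicate (2 * r + 1) none ++ [some d]) (r + 1) ++
        List.replicate r (some b) ++
        listPow (List.replicate r none ++ [some c]) i ++
        List.replicate (j - 1) none ++ [some c] : List (Option A))) := by
  refine PartialWord.unbordered_of_mismatchAt fun k hk₀ hk => ?_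
  rw [← wichmannWord, length_wichmannWord hj1] at hk
  rcases le_or_gt k r with h₁ | h₁
  · exact mismatchAt_wichmannWord_start_bPrefix hab hk₀ h₁
  rcases le_or_gt k ((r + 1) * (2 * r + 1)) with h₂ | h₂
  · exact mismatchAt_wichmannWord_of_le_middle hab hac had hbc hbd hcd h₁ h₂
  rcases le_or_gt k ((r + 1) * (2 * r + 1) + s * (4 * r + 3) + r + 1) with h₃ | h₃
  · exact mismatchAt_wichmannWord_of_cBlock hab hac had hbc hbd hcd h₂ h₃
  rcases le_or_gt k ((r + 1) * (2 * r + 1) + s * (4 * r + 3) + (r + 1) * (2 * r + 2)) with h₄ | h₄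
  · exact mismatchAt_wichmannWord_of_dBlock hab had hbd h₃ h₄
  · exact mismatchAt_wichmannWord_of_bSuffix hab hac hbc hj1 hj2 h₄ (by omega)
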